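/- arXiv:0807.4696 — 7 statements merged into one kernel-verified Lean document; each statement's English description precedes it below -/
import Mathlib

section
/- Let n ≥ 1, let Λ ∈ Mat(n,ℂ) be a diagonal matrix whose diagonal entries are pairwise distinct and all nonzero, and let A ∈ Mat(n,ℂ) be arbitrary. Then the family {Λ, A} is irreducible if and only if the unital ℂ-subalgebra of Mat(n,ℂ) generated by the matrix units {E_{km} : (k,m) ∈ Supp(A)} is all of Mat(n,ℂ). -/
/-!
Both sides are equivalent to the strong connectivity of the directed graph on the indices with an
edge `k → m` whenever `A k m ≠ 0`. Products of matrix units along paths give every `E_km`, while a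
set of indices closed under edges makes all generators block triangular. A subspace invariant under
a diagonal matrix with distinct entries contains `e_k` as soon as it contains a vector with nonzero
`k`-th coordinate, and `A e_m` has nonzero `k`-th coordinate along each edge `k → m`; conversely,
the vectors supported on the indices from which `m` is reachable form an invariant subspace.
-/

open Relation

namespace Matrix

section Invariant

variable {K ι : Type*} [Field K] [Fintype ι]

theorem mulVec_mem_pi_bot {A : Matrix ι ι K} {t : Set ι} (ht : ∀ i ∈ t, ∀ j, A i j ≠ 0 → j ∈ t)
    {v : ι → K} (hv : v ∈ Submodule.pi t fun _ => (⊥ : Submodule K K)) :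
    A *ᵥ v ∈ Submodule.pi t fun _ => (⊥ : Submodule K K) := by
  simp only [Submodule.mem_pi, Submodule.mem_bot] at hv ⊢
  intro i hi
  refine Finset.sum_eq_zero fun j _ => ?_
  by_cases hij : A i j = 0
  · exact mul_eq_zero_of_left hij _
  · exact mul_eq_zero_of_right _ (hv j (ht i hi j hij))

variable [DecidableEq ι]

theorem diagonal_mulVec_mem_pi_bot (d : ι → K) (t : Set ι) {v : ι → K}
    (hv : v ∈ Submodule.pi t fun _ => (⊥ : Submodule K K)) :
    diagonal d *ᵥ v ∈ Submodule.pi t fun _ => (⊥ : Submodule K K) := by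
  simp only [Submodule.mem_pi, Submodule.mem_bot, mulVec_diagonal] at hv ⊢
  intro i hi
  rw [hv i hi, mul_zero]

theorem reflTransGen_of_irreducible (d : ι → K) (A : Matrix ι ι K)
    (hirr : ∀ V : Submodule K (ι → K), (∀ v ∈ V, diagonal d *ᵥ v ∈ V) →
      (∀ v ∈ V, A *ᵥ v ∈ V) → V = ⊥ ∨ V = ⊤) (k m : ι) :
    ReflTransGen (fun i j => A i j ≠ 0) k m := by
  by_contra hkm
  set t := {i | ¬ ReflTransGen (fun i j => A i j ≠ 0) i m}
  have hA : ∀ i ∈ t, ∀ j, A i j ≠ 0 → j ∈ t := fun i hi j hij hj => hi (.head hij hj)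
  have hm : Pi.single m (1 : K) ∈ Submodule.pi t fun _ => (⊥ : Submodule K K) := by
    simp only [Submodule.mem_pi, Submodule.mem_bot]
    exact fun i hi => Pi.single_eq_of_ne (by rintro rfl; exact hi .refl) _
  rcases hirr _ (fun _ => diagonal_mulVec_mem_pi_bot d t) (fun _ => mulVec_mem_pi_bot hA) with
    hbot | htop
  · simp [hbot] at hm
  · have hk := (Submodule.mem_pi.1 (htop ▸ Submodule.mem_top : Pi.single k (1 : K) ∈ _)) k hkm
    simp at hk

theorem prod_sub_mul_mem_of_diagonal_invariant {d : ι → K} {V : Submodule K (ι → K)}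
    (hV : ∀ v ∈ V, diagonal d *ᵥ v ∈ V) {v : ι → K} (hv : v ∈ V) (s : Finset ι) :
    (fun i => (∏ j ∈ s, (d i - d j)) * v i) ∈ V := by
  induction s using Finset.induction_on with
  | empty => simpa using hv
  | insert a s ha ih =>
    convert V.sub_mem (hV _ ih) (V.smul_mem (d a) ih) using 1
    funext i
    simp only [mulVec_diagonal, Finset.prod_insert ha, Pi.sub_apply, Pi.smul_apply, smul_eq_mul]
    ring

/-- For distinct `d j`, `∏_{j ≠ k} (diagonal d - d j)` maps `v` to a multiple of `v k • e_k`. -/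
theorem single_mem_of_diagonal_invariant {d : ι → K} (hd : Function.Injective d)
    {V : Submodule K (ι → K)} (hV : ∀ v ∈ V, diagonal d *ᵥ v ∈ V) {v : ι → K} (hv : v ∈ V)
    {k : ι} (hk : v k ≠ 0) : Pi.single k 1 ∈ V := by
  set c := (∏ j ∈ Finset.univ.erase k, (d k - d j)) * v k
  have hc : c ≠ 0 := by
    refine mul_ne_zero (Finset.prod_ne_zero_iff.2 fun j hj => sub_ne_zero.2 fun h => ?_) hk
    exact (Finset.mem_erase.1 hj).1 (hd h).symm
  have hproj : (fun i => (∏ j ∈ Finset.univ.erase k, (d i - d j)) * v i) = c • Pi.single k 1 := by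
    funext i
    rcases eq_or_ne i k with rfl | hik
    · simp [c]
    · have hzero : ∏ j ∈ Finset.univ.erase k, (d i - d j) = 0 :=
        Finset.prod_eq_zero (Finset.mem_erase.2 ⟨hik, Finset.mem_univ i⟩) (sub_self (d i))
      simp [hzero, Pi.single_eq_of_ne hik]
  rw [← V.smul_mem_iff hc, ← hproj]
  exact prod_sub_mul_mem_of_diagonal_invariant hV hv _

theorem eq_top_of_invariant_of_reflTransGen {d : ι → K} (hd : Function.Injective d)
    {A : Matrix ι ι K} (hA : ∀ k m, ReflTransGen (fun i j => A i j ≠ 0) k m)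
    {V : Submodule K (ι → K)} (hdV : ∀ v ∈ V, diagonal d *ᵥ v ∈ V) (hAV : ∀ v ∈ V, A *ᵥ v ∈ V)
    (hV : V ≠ ⊥) : V = ⊤ := by
  obtain ⟨v, hv, hv0⟩ := V.ne_bot_iff.1 hV
  obtain ⟨k, hk⟩ := Function.ne_iff.1 hv0
  have hsingle (m : ι) : Pi.single m 1 ∈ V := by
    induction hA m k using ReflTransGen.head_induction_on with
    | refl => exact single_mem_of_diagonal_invariant hd hdV hv hk
    | head hac _ hc =>
      refine single_mem_of_diagonal_invariant hd hdV (hAV _ hc) ?_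
      simpa [mulVec_single] using hac
  rw [eq_top_iff, ← (Pi.basisFun K ι).span_eq, Submodule.span_le]
  rintro _ ⟨m, rfl⟩
  simpa using hsingle m

theorem irreducible_diagonal_iff {d : ι → K} (hd : Function.Injective d) (A : Matrix ι ι K) :
    (∀ V : Submodule K (ι → K), (∀ v ∈ V, diagonal d *ᵥ v ∈ V) →
      (∀ v ∈ V, A *ᵥ v ∈ V) → V = ⊥ ∨ V = ⊤) ↔
      ∀ k m, ReflTransGen (fun i j => A i j ≠ 0) k m :=
  ⟨reflTransGen_of_irreducible d A, fun hA _ hdV hAV =>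
    or_iff_not_imp_left.2 (eq_top_of_invariant_of_reflTransGen hd hA hdV hAV)⟩

end Invariant

section Adjoin

variable {R ι : Type*} [CommSemiring R] [Fintype ι] [DecidableEq ι]

theorem single_mem_adjoin_of_transGen {r : ι → ι → Prop} {k m : ι} (h : TransGen r k m) :
    single k m (1 : R) ∈ Algebra.adjoin R {E | ∃ k m, r k m ∧ E = single k m 1} := by
  induction h with
  | single hkm => exact Algebra.subset_adjoin ⟨_, _, hkm, rfl⟩
  | tail _ hbc ih =>
    have := mul_mem ih (Algebra.subset_adjoin ⟨_, _, hbc, rfl⟩)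
    rwa [single_mul_single_same, one_mul] at this

theorem eq_top_of_forall_single_mem {S : Subalgebra R (Matrix ι ι R)}
    (h : ∀ k m, single k m (1 : R) ∈ S) : S = ⊤ := by
  rw [← Algebra.toSubmodule_eq_top, eq_top_iff, ← (stdBasis R ι ι).span_eq, Submodule.span_le]
  rintro _ ⟨⟨k, m⟩, rfl⟩
  rw [stdBasis_eq_single]
  exact h k m

theorem adjoin_single_eq_top_iff [Nontrivial R] (r : ι → ι → Prop) :
    Algebra.adjoin R {E : Matrix ι ι R | ∃ k m, r k m ∧ E = single k m 1} = ⊤ ↔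
      ∀ k m, ReflTransGen r k m := by
  constructor
  · intro htop k m
    by_contra hkm
    have hle : Algebra.adjoin R {E : Matrix ι ι R | ∃ k m, r k m ∧ E = single k m 1} ≤
        blockTriangularSubalgebra R R (fun i => ReflTransGen r k i) := by
      refine Algebra.adjoin_le ?_
      rintro _ ⟨a, b, hab, rfl⟩
      exact blockTriangular_single (fun ha => ha.tail hab) 1
    rw [htop] at hle
    have := hle (Algebra.mem_top (x := single k m (1 : R))) (i := k) (j := m)
      ⟨fun h => (hkm h).elim, fun h => hkm (h .refl)⟩
    simp at this
  · intro hr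
    have htrans (k m : ι) (hkm : k ≠ m) : TransGen r k m :=
      (reflTransGen_iff_eq_or_transGen.1 (hr k m)).resolve_left hkm.symm
    refine eq_top_of_forall_single_mem fun k m => ?_
    rcases ne_or_eq k m with hkm | rfl
    · exact single_mem_adjoin_of_transGen (htrans k m hkm)
    by_cases hj : ∃ j, j ≠ k
    · obtain ⟨j, hj⟩ := hj
      exact single_mem_adjoin_of_transGen ((htrans k j hj.symm).trans (htrans j k hj))
    · push Not at hj
      have hone : single k k (1 : R) = 1 := by
        ext i j
        obtain rfl := hj i
        obtain rfl := hj j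
        simp
      exact hone ▸ one_mem _

end Adjoin

end Matrix

theorem stmt_0_general (n : ℕ) (d : Fin n → ℂ)
    (hdist : Function.Injective d)
    (A : Matrix (Fin n) (Fin n) ℂ) :
    (∀ V : Submodule ℂ (Fin n → ℂ),
        (∀ v ∈ V, (Matrix.diagonal d).mulVec v ∈ V) →
        (∀ v ∈ V, A.mulVec v ∈ V) → V = ⊥ ∨ V = ⊤)
    ↔ Algebra.adjoin ℂ
        {E : Matrix (Fin n) (Fin n) ℂ |
          ∃ k m, A k m ≠ 0 ∧ E = Matrix.single k m 1} = ⊤ := by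
  rw [Matrix.irreducible_diagonal_iff hdist, Matrix.adjoin_single_eq_top_iff]

/-- Irreducibility criterion: for `Λ = diagonal d` with pairwise distinct nonzero
diagonal entries and arbitrary `A`, the family `{Λ, A}` is irreducible iff
the unital subalgebra generated by the matrix units supported on `Supp A`
is all of `Mat(n, ℂ)`. -/
theorem stmt_0 (n : ℕ) (hn : 1 ≤ n) (d : Fin n → ℂ)
    (hdist : Function.Injective d) (hnz : ∀ k, d k ≠ 0)
    (A : Matrix (Fin n) (Fin n) ℂ) :
    (∀ V : Submodule ℂ (Fin n → ℂ),
        (∀ v ∈ V, (Matrix.diagonal d).mulVec v ∈ V) →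
        (∀ v ∈ V, A.mulVec v ∈ V) → V = ⊥ ∨ V = ⊤)
    ↔ Algebra.adjoin ℂ
        {E : Matrix (Fin n) (Fin n) ℂ |
          ∃ k m, A k m ≠ 0 ∧ E = Matrix.single k m 1} = ⊤ :=
  stmt_0_general n d hdist A
end

section
/- Let n ≥ 1, let Λ ∈ Mat(n,ℂ) be a diagonal matrix whose diagonal entries are pairwise distinct and all nonzero, and let A ∈ Mat(n,ℂ) be arbitrary. Then the family {Λ, A} is Schur irreducible if and only if the unital ℂ-subalgebra of Mat(n,ℂ) generated by the matrix units {E_{km} : (k,m) ∈ Supp(A) ∪ Supp(Aᵗ)} is all of Mat(n,ℂ). -/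
/-!
Both conditions say that the support graph of `A`, in which `k ≠ m` are adjacent when
`A k m ≠ 0` or `A m k ≠ 0`, is connected. Since the `d k` are distinct, a matrix commuting
with `Λ = diagonal d` is diagonal, and `diagonal b` commutes with `A` iff `b` is constant
along the edges; the indicator of a connected component is such a `b`. On the algebra side,
products of matrix units along a path give every `E_{km}`, while the matrices vanishing on
pairs in different components form a subalgebra containing all the generators.
-/

open Matrix

theorem SimpleGraph.Reachable.apply_eq_of_adj {V β : Type*} {G : SimpleGraph V} {f : V → β}
    (hf : ∀ u v, G.Adj u v → f u = f v) {u v : V} (h : G.Reachable u v) : f u = f v := by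
  rw [SimpleGraph.reachable_iff_reflTransGen] at h
  induction h with
  | refl => rfl
  | tail _ hadj ih => exact ih.trans (hf _ _ hadj)

namespace Matrix

variable {ι R : Type*}

def supportGraph [Zero R] (A : Matrix ι ι R) : SimpleGraph ι :=
  SimpleGraph.fromRel fun k m => A k m ≠ 0

theorem supportGraph_adj [Zero R] {A : Matrix ι ι R} {k m : ι} :
    A.supportGraph.Adj k m ↔ k ≠ m ∧ (A k m ≠ 0 ∨ A m k ≠ 0) :=
  SimpleGraph.fromRel_adj _ _ _

theorem supportGraph_reachable_of_ne_zero [Zero R] {A : Matrix ι ι R} {k m : ι}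
    (h : A k m ≠ 0) : A.supportGraph.Reachable k m := by
  obtain rfl | hkm := eq_or_ne k m
  · rfl
  · exact (supportGraph_adj.2 ⟨hkm, .inl h⟩).reachable

variable [Fintype ι] [DecidableEq ι]

section Commutant

variable [CommRing R] [NoZeroDivisors R]

theorem isDiag_of_commute_diagonal {d : ι → R} (hd : Function.Injective d)
    {B : Matrix ι ι R} (h : Commute B (diagonal d)) : B.IsDiag := by
  intro k m hkm
  have hkm' : B k m * d m = d k * B k m := by
    simpa only [mul_diagonal, diagonal_mul] using congr_fun₂ h k m
  have : B k m * (d m - d k) = 0 := by linear_combination hkm'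
  exact (mul_eq_zero.1 this).resolve_right (sub_ne_zero.2 (hd.ne hkm.symm))

theorem commute_diagonal_iff {f : ι → R} {A : Matrix ι ι R} :
    Commute (diagonal f) A ↔ ∀ k m, A k m ≠ 0 → f k = f m := by
  simp only [Commute, SemiconjBy, ← Matrix.ext_iff, diagonal_mul, mul_diagonal]
  refine forall₂_congr fun k m => ⟨fun h hA => ?_, fun h => ?_⟩
  · exact mul_right_cancel₀ hA (by rw [h, mul_comm])
  · by_cases hA : A k m = 0
    · simp [hA]
    · rw [h hA, mul_comm]

end Commutant

def IsSchurIrreducible [Semiring R] (F : Set (Matrix ι ι R)) : Prop :=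
  ∀ B : Matrix ι ι R, (∀ X ∈ F, Commute B X) → ∃ c : R, B = c • 1

theorem isSchurIrreducible_diagonal_pair_iff [CommRing R] [IsDomain R] {d : ι → R}
    (hd : Function.Injective d) (A : Matrix ι ι R) :
    IsSchurIrreducible {diagonal d, A} ↔ A.supportGraph.Preconnected := by
  simp only [IsSchurIrreducible, Set.forall_mem_insert, Set.mem_singleton_iff, forall_eq]
  constructor
  · classical
    intro hirr k₀ m₀
    by_contra hk₀m₀
    let f : ι → R := fun k => if A.supportGraph.Reachable k₀ k then 1 else 0
    have hfA : Commute (diagonal f) A := commute_diagonal_iff.2 fun k m hA => by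
      have hkm := supportGraph_reachable_of_ne_zero hA
      have : A.supportGraph.Reachable k₀ k ↔ A.supportGraph.Reachable k₀ m :=
        ⟨fun h => h.trans hkm, fun h => h.trans hkm.symm⟩
      simp only [f, this]
    obtain ⟨c, hc⟩ := hirr _ ⟨commute_diagonal _ _, hfA⟩
    have hf : ∀ k, f k = c := fun k => by simpa using congr_fun₂ hc k k
    simpa [f, hk₀m₀] using (hf k₀).trans (hf m₀).symm
  · rintro hG B ⟨hBd, hBA⟩
    have hB := (isDiag_of_commute_diagonal hd hBd).diagonal_diag
    rw [← hB] at hBA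
    have hconst : ∀ k m, B k k = B m m := fun k m =>
      (hG k m).apply_eq_of_adj (f := fun k => B k k) fun u v huv => by
        have hdiagA := commute_diagonal_iff.1 hBA
        rcases (supportGraph_adj.1 huv).2 with h | h
        · exact hdiagA u v h
        · exact (hdiagA v u h).symm
    rcases isEmpty_or_nonempty ι with _ | ⟨⟨k₀⟩⟩
    · exact ⟨0, Subsingleton.elim _ _⟩
    · refine ⟨B k₀ k₀, ?_⟩
      nth_rw 1 [← hB]
      rw [smul_one_eq_diagonal]
      exact congrArg diagonal (funext fun k => hconst k k₀)

section Adjoin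

variable [CommSemiring R]

def supportSingles (A : Matrix ι ι R) : Set (Matrix ι ι R) :=
  {E | ∃ k m, (A k m ≠ 0 ∨ Aᵀ k m ≠ 0) ∧ E = single k m 1}

variable (R) in
def reachableSubalgebra (G : SimpleGraph ι) : Subalgebra R (Matrix ι ι R) where
  carrier := {X | ∀ k m, ¬G.Reachable k m → X k m = 0}
  mul_mem' {X Y} hX hY k m hkm := by
    rw [mul_apply]
    refine Finset.sum_eq_zero fun j _ => ?_
    by_cases hkj : G.Reachable k j
    · rw [hY j m fun hjm => hkm (hkj.trans hjm), mul_zero]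
    · rw [hX k j hkj, zero_mul]
  add_mem' {X Y} hX hY k m hkm := by rw [add_apply, hX k m hkm, hY k m hkm, add_zero]
  algebraMap_mem' r k m hkm := by
    rw [algebraMap_matrix_apply, if_neg]
    rintro rfl
    exact hkm (SimpleGraph.Reachable.refl k)

theorem adjoin_supportSingles_le (A : Matrix ι ι R) :
    Algebra.adjoin R A.supportSingles ≤ reachableSubalgebra R A.supportGraph := by
  refine Algebra.adjoin_le ?_
  rintro _ ⟨k, m, hA, rfl⟩ i j hij
  have hkm : A.supportGraph.Reachable k m :=
    hA.elim supportGraph_reachable_of_ne_zero fun h : A m k ≠ 0 =>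
      (supportGraph_reachable_of_ne_zero h).symm
  rw [single_apply_of_ne]
  rintro ⟨rfl, rfl⟩
  exact hij hkm

theorem single_mem_adjoin_supportSingles_of_adj {A : Matrix ι ι R} {k m : ι}
    (h : A.supportGraph.Adj k m) : single k m 1 ∈ Algebra.adjoin R A.supportSingles :=
  Algebra.subset_adjoin ⟨k, m, (supportGraph_adj.1 h).2, rfl⟩

theorem single_mem_adjoin_supportSingles {A : Matrix ι ι R} (hG : A.supportGraph.Preconnected)
    (k m : ι) : single k m 1 ∈ Algebra.adjoin R A.supportSingles := by
  have hdiag : ∀ j, single j j (1 : R) ∈ Algebra.adjoin R A.supportSingles := fun j => by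
    rcases subsingleton_or_nontrivial ι with _ | _
    · convert (Algebra.adjoin R A.supportSingles).one_mem
      ext a b
      rw [Subsingleton.elim a j, Subsingleton.elim b j]
      simp
    · obtain ⟨u, hju⟩ := hG.exists_adj_of_nontrivial j
      simpa using mul_mem (single_mem_adjoin_supportSingles_of_adj hju)
        (single_mem_adjoin_supportSingles_of_adj hju.symm)
  have hkm := (SimpleGraph.reachable_iff_reflTransGen k m).1 (hG k m)
  induction hkm with
  | refl => exact hdiag k
  | tail _ hadj ih => simpa using mul_mem ih (single_mem_adjoin_supportSingles_of_adj hadj)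

theorem subalgebra_eq_top_of_single_one_mem (S : Subalgebra R (Matrix ι ι R))
    (h : ∀ k m, single k m 1 ∈ S) : S = ⊤ := by
  refine eq_top_iff.2 fun X _ => ?_
  rw [matrix_eq_sum_single X]
  exact sum_mem fun k _ => sum_mem fun m _ => by
    simpa [smul_single] using S.smul_mem (h k m) (X k m)

theorem adjoin_supportSingles_eq_top_iff [Nontrivial R] (A : Matrix ι ι R) :
    Algebra.adjoin R A.supportSingles = ⊤ ↔ A.supportGraph.Preconnected := by
  refine ⟨fun htop k m => ?_, fun hG =>
    subalgebra_eq_top_of_single_one_mem _ (single_mem_adjoin_supportSingles hG)⟩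
  by_contra hkm
  have hmem : single k m (1 : R) ∈ reachableSubalgebra R A.supportGraph :=
    adjoin_supportSingles_le A (htop ▸ Algebra.mem_top)
  simpa using hmem k m hkm

end Adjoin

end Matrix

theorem stmt_1_general (n : ℕ) (d : Fin n → ℂ)
    (hdist : Function.Injective d)
    (A : Matrix (Fin n) (Fin n) ℂ) :
    (∀ B : Matrix (Fin n) (Fin n) ℂ,
        B * Matrix.diagonal d = Matrix.diagonal d * B →
        B * A = A * B → ∃ c : ℂ, B = c • (1 : Matrix (Fin n) (Fin n) ℂ))
    ↔ Algebra.adjoin ℂ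
        {E : Matrix (Fin n) (Fin n) ℂ |
          ∃ k m, (A k m ≠ 0 ∨ A.transpose k m ≠ 0) ∧ E = Matrix.single k m 1} = ⊤ := by
  have h := (isSchurIrreducible_diagonal_pair_iff hdist A).trans
    (adjoin_supportSingles_eq_top_iff A).symm
  simp only [IsSchurIrreducible, Set.forall_mem_insert, Set.mem_singleton_iff, forall_eq,
    and_imp] at h
  exact h

/-- Schur irreducibility criterion: `{Λ, A}` is Schur irreducible iff the unital
subalgebra generated by the matrix units supported on `Supp A ∪ Supp Aᵗ` is all
of `Mat(n, ℂ)`. -/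
theorem stmt_1 (n : ℕ) (hn : 1 ≤ n) (d : Fin n → ℂ)
    (hdist : Function.Injective d) (hnz : ∀ k, d k ≠ 0)
    (A : Matrix (Fin n) (Fin n) ℂ) :
    (∀ B : Matrix (Fin n) (Fin n) ℂ,
        B * Matrix.diagonal d = Matrix.diagonal d * B →
        B * A = A * B → ∃ c : ℂ, B = c • (1 : Matrix (Fin n) (Fin n) ℂ))
    ↔ Algebra.adjoin ℂ
        {E : Matrix (Fin n) (Fin n) ℂ |
          ∃ k m, (A k m ≠ 0 ∨ A.transpose k m ≠ 0) ∧ E = Matrix.single k m 1} = ⊤ :=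
  stmt_1_general n d hdist A
end

section
/- Let n ≥ 1 and let S ⊆ {1,…,n}² be a set of index pairs such that the pattern subspace s_S = {x ∈ Mat(n,ℂ) : x_{km} = 0 for (k,m) ∉ S} is a unital ℂ-subalgebra of Mat(n,ℂ) with s_S ≠ Mat(n,ℂ). Then there exists a nonempty proper subset i ⊆ {1,…,n} such that s_S ⊆ s_i, where s_i = {x ∈ Mat(n,ℂ) : x_{km} = 0 whenever k ∉ i and m ∈ i}. In particular, every maximal proper subalgebra of Mat(n,ℂ) of pattern form equals s_i for some nonempty proper subset i. -/
/-! A unital pattern subalgebra `s_S` forces `S` to be a preorder: `1 ∈ s_S` gives reflexivity and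
`E_kl E_lm = E_km` gives transitivity. Properness yields a pair `(a, b) ∉ S`; then
`i = {m | (m, b) ∈ S}` contains `b` but not `a`, and by transitivity no `(k, m)` with `k ∉ i`,
`m ∈ i` lies in `S`. -/

namespace Matrix

variable {ι R : Type*}

/-- The pattern subspace `s_S`. -/
def patternSet [Zero R] (S : Set (ι × ι)) : Set (Matrix ι ι R) :=
  {x | ∀ p ∉ S, x p.1 p.2 = 0}

theorem exists_notMem_of_patternSet_ne_univ [Zero R] {S : Set (ι × ι)}
    (h : (patternSet S : Set (Matrix ι ι R)) ≠ Set.univ) : ∃ p, p ∉ S := by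
  by_contra! hS
  exact h (Set.eq_univ_of_forall fun x p hp => absurd (hS p) hp)

theorem patternSet_subset_of_trans [Zero R] {S : Set (ι × ι)}
    (htrans : ∀ k l m, (k, l) ∈ S → (l, m) ∈ S → (k, m) ∈ S) (b : ι) :
    (patternSet S : Set (Matrix ι ι R)) ⊆
      {x | ∀ k m, k ∉ {m | (m, b) ∈ S} → m ∈ {m | (m, b) ∈ S} → x k m = 0} :=
  fun _ hx k m hk hm => hx (k, m) fun hkm => hk (htrans k m b hkm hm)

variable [DecidableEq ι]

theorem single_mem_patternSet [Zero R] {S : Set (ι × ι)} {k l : ι} (hkl : (k, l) ∈ S) (c : R) :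
    single k l c ∈ patternSet S := by
  rintro ⟨k', l'⟩ hk'l'
  rw [single_apply_of_ne]
  rintro ⟨rfl, rfl⟩
  exact hk'l' hkl

theorem diag_mem_of_one_mem_patternSet [Zero R] [One R] [NeZero (1 : R)] {S : Set (ι × ι)}
    (hone : (1 : Matrix ι ι R) ∈ patternSet S) (k : ι) : (k, k) ∈ S := by
  by_contra h
  simpa using hone (k, k) h

theorem trans_of_mul_mem_patternSet [Fintype ι] [Semiring R] [Nontrivial R] {S : Set (ι × ι)}
    (hmul : ∀ x y : Matrix ι ι R, x ∈ patternSet S → y ∈ patternSet S → x * y ∈ patternSet S)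
    {k l m : ι} (hkl : (k, l) ∈ S) (hlm : (l, m) ∈ S) : (k, m) ∈ S := by
  by_contra h
  have := hmul _ _ (single_mem_patternSet hkl (1 : R)) (single_mem_patternSet hlm 1) (k, m) h
  rw [single_mul_single_same, mul_one] at this
  simp at this

end Matrix

theorem stmt_4_general (n : ℕ) (S : Set (Fin n × Fin n))
    (hone : (1 : Matrix (Fin n) (Fin n) ℂ) ∈
        {x : Matrix (Fin n) (Fin n) ℂ | ∀ p ∉ S, x p.1 p.2 = 0})
    (hmul : ∀ x y : Matrix (Fin n) (Fin n) ℂ,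
        (∀ p ∉ S, x p.1 p.2 = 0) → (∀ p ∉ S, y p.1 p.2 = 0) →
        ∀ p ∉ S, (x * y) p.1 p.2 = 0)
    (hproper : {x : Matrix (Fin n) (Fin n) ℂ | ∀ p ∉ S, x p.1 p.2 = 0} ≠ Set.univ) :
    ∃ i : Set (Fin n), i.Nonempty ∧ i ≠ Set.univ ∧
      {x : Matrix (Fin n) (Fin n) ℂ | ∀ p ∉ S, x p.1 p.2 = 0} ⊆
        {x : Matrix (Fin n) (Fin n) ℂ | ∀ k m, k ∉ i → m ∈ i → x k m = 0} := by
  have htrans (k l m) : (k, l) ∈ S → (l, m) ∈ S → (k, m) ∈ S :=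
    Matrix.trans_of_mul_mem_patternSet hmul
  obtain ⟨⟨a, b⟩, hab⟩ := Matrix.exists_notMem_of_patternSet_ne_univ hproper
  refine ⟨{m | (m, b) ∈ S}, ⟨b, Matrix.diag_mem_of_one_mem_patternSet hone b⟩,
    (Set.ne_univ_iff_exists_notMem _).mpr ⟨a, hab⟩, ?_⟩
  exact Matrix.patternSet_subset_of_trans htrans b

/-- Every proper unital pattern subalgebra of `Mat(n, ℂ)` is contained in `s_i` for
some nonempty proper subset `i` of the index set.  In particular every maximal
proper pattern subalgebra is of the form `s_i`. -/
theorem stmt_4 (n : ℕ) (hn : 1 ≤ n) (S : Set (Fin n × Fin n))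
    (hone : (1 : Matrix (Fin n) (Fin n) ℂ) ∈
        {x : Matrix (Fin n) (Fin n) ℂ | ∀ p ∉ S, x p.1 p.2 = 0})
    (hmul : ∀ x y : Matrix (Fin n) (Fin n) ℂ,
        (∀ p ∉ S, x p.1 p.2 = 0) → (∀ p ∉ S, y p.1 p.2 = 0) →
        ∀ p ∉ S, (x * y) p.1 p.2 = 0)
    (hproper : {x : Matrix (Fin n) (Fin n) ℂ | ∀ p ∉ S, x p.1 p.2 = 0} ≠ Set.univ) :
    ∃ i : Set (Fin n), i.Nonempty ∧ i ≠ Set.univ ∧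
      {x : Matrix (Fin n) (Fin n) ℂ | ∀ p ∉ S, x p.1 p.2 = 0} ⊆
        {x : Matrix (Fin n) (Fin n) ℂ | ∀ k m, k ∉ i → m ∈ i → x k m = 0} :=
  stmt_4_general n S hone hmul hproper
end

section
/- Let n ≥ 1, let Λ ∈ Mat(n,ℂ) be a diagonal matrix whose diagonal entries are pairwise distinct and all nonzero, and let A ∈ Mat(n,ℂ) be arbitrary. Then the family {Λ, A} is irreducible if and only if the digraph Γ_A is strongly connected. -/
/-!
A subspace `V` invariant under a diagonal matrix with distinct entries is a coordinate subspace: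
applying the Lagrange interpolation polynomial of the node `d k` to `Λ` projects `V` onto the
`k`-th coordinate. If moreover `A V ⊆ V`, then `e_m ∈ V` and `A m' m ≠ 0` give `e_{m'} ∈ V`, so the
coordinates of `V` are closed under predecessors in `Γ_A`. Conversely, the vectors supported on
the (predecessor-closed) set of vertices from which `m` can be reached form an invariant subspace
containing `e_m`, which is proper unless every vertex reaches `m`.
-/

open Polynomial Matrix

namespace Matrix

variable {ι : Type*} [Fintype ι] [DecidableEq ι]

theorem aeval_toLinAlgEquiv'_diagonal_apply {K : Type*} [CommSemiring K] (d : ι → K) (p : K[X])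
    (v : ι → K) : aeval (toLinAlgEquiv' (diagonal d)) p v = fun i => p.eval (d i) * v i := by
  have h := aeval_algHom_apply ((toLinAlgEquiv' (R := K) (n := ι)).toAlgHom.comp
    (diagonalAlgHom K)) d p
  simp only [AlgHom.coe_comp, AlgEquiv.coe_toAlgHom, Function.comp_apply, diagonalAlgHom_apply,
    aeval_pi] at h
  funext i
  rw [h, toLinAlgEquiv'_apply, mulVec_diagonal, AlgHom.pi_apply, coe_aeval_eq_eval]

section Field

variable {K : Type*} [Field K] {d : ι → K} {V : Submodule K (ι → K)}

theorem single_mem_of_diagonal_mulVec_mem (hd : Function.Injective d)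
    (hV : ∀ v ∈ V, diagonal d *ᵥ v ∈ V) {v : ι → K} (hv : v ∈ V) (k : ι) :
    Pi.single k (v k) ∈ V := by
  have h := aeval_apply_smul_mem_of_le_comap hv (Lagrange.basis Finset.univ d k)
    (toLinAlgEquiv' (diagonal d)) hV
  convert h using 1
  rw [aeval_toLinAlgEquiv'_diagonal_apply]
  funext i
  rcases eq_or_ne i k with rfl | hik
  · simp [Lagrange.eval_basis_self hd.injOn]
  · simp [Lagrange.eval_basis_of_ne hik.symm, hik]

theorem single_one_mem_of_diagonal_mulVec_mem (hd : Function.Injective d)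
    (hV : ∀ v ∈ V, diagonal d *ᵥ v ∈ V) {v : ι → K} (hv : v ∈ V) {k : ι} (hk : v k ≠ 0) :
    Pi.single k 1 ∈ V := by
  have h := V.smul_mem (v k)⁻¹ (single_mem_of_diagonal_mulVec_mem hd hV hv k)
  rwa [← Pi.single_smul, smul_eq_mul, inv_mul_cancel₀ hk] at h

theorem eq_top_of_reflTransGen_of_diagonal_mulVec_mem (hd : Function.Injective d)
    {A : Matrix ι ι K} (hconn : ∀ k m : ι, Relation.ReflTransGen (fun a b => A a b ≠ 0) k m)
    (hΛ : ∀ v ∈ V, diagonal d *ᵥ v ∈ V) (hA : ∀ v ∈ V, A *ᵥ v ∈ V) (hV : V ≠ ⊥) :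
    V = ⊤ := by
  obtain ⟨v, hv, hv0⟩ := Submodule.exists_mem_ne_zero_of_ne_bot hV
  obtain ⟨m, hm⟩ := Function.ne_iff.mp hv0
  have hsingle (k : ι) : Pi.single k 1 ∈ V := by
    induction hconn k m using Relation.ReflTransGen.head_induction_on with
    | refl => exact single_one_mem_of_diagonal_mulVec_mem hd hΛ hv hm
    | @head a b hab _ ih =>
      refine single_one_mem_of_diagonal_mulVec_mem hd hΛ (hA _ ih) (k := a) ?_
      simpa [mulVec_single_one] using hab
  rw [eq_top_iff, ← (Pi.basisFun K ι).span_eq, Submodule.span_le]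
  rintro _ ⟨k, rfl⟩
  simpa using hsingle k

end Field

section Semiring

variable {R : Type*} [Semiring R] {S : Set ι}

omit [DecidableEq ι] in
theorem mulVec_mem_pi_compl_bot {A : Matrix ι ι R} (hS : ∀ i j, A i j ≠ 0 → j ∈ S → i ∈ S)
    {v : ι → R} (hv : v ∈ Submodule.pi Sᶜ fun _ => (⊥ : Submodule R R)) :
    A *ᵥ v ∈ Submodule.pi Sᶜ fun _ => (⊥ : Submodule R R) := by
  intro i hi
  refine (Submodule.mem_bot R).2 (Finset.sum_eq_zero fun j _ => ?_)
  by_cases hAij : A i j = 0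
  · simp [hAij]
  · have hj : j ∉ S := fun hj => hi (hS i j hAij hj)
    simp [(Submodule.mem_bot R).1 (hv j hj)]

theorem diagonal_mulVec_mem_pi_compl_bot (d : ι → R) {v : ι → R}
    (hv : v ∈ Submodule.pi Sᶜ fun _ => (⊥ : Submodule R R)) :
    diagonal d *ᵥ v ∈ Submodule.pi Sᶜ fun _ => (⊥ : Submodule R R) :=
  mulVec_mem_pi_compl_bot (fun i j hij hj => by rwa [not_not.1 (mt (diagonal_apply_ne d) hij)]) hv

omit [Fintype ι] in
theorem single_one_mem_pi_compl_bot_iff [Nontrivial R] {k : ι} :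
    Pi.single k (1 : R) ∈ (Submodule.pi Sᶜ fun _ => (⊥ : Submodule R R)) ↔ k ∈ S := by
  refine ⟨fun h => of_not_not fun hk => by simpa using h k hk, fun hk j hj => ?_⟩
  simp [show j ≠ k from fun h => hj (h ▸ hk)]

theorem reflTransGen_of_forall_invariant_eq_bot_or_eq_top [Nontrivial R] {d : ι → R}
    {A : Matrix ι ι R}
    (hirr : ∀ V : Submodule R (ι → R), (∀ v ∈ V, diagonal d *ᵥ v ∈ V) →
      (∀ v ∈ V, A *ᵥ v ∈ V) → V = ⊥ ∨ V = ⊤)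
    (k m : ι) : Relation.ReflTransGen (fun a b => A a b ≠ 0) k m := by
  set S := {j | Relation.ReflTransGen (fun a b => A a b ≠ 0) j m}
  have hS (i j : ι) (hij : A i j ≠ 0) (hj : j ∈ S) : i ∈ S := Relation.ReflTransGen.head hij hj
  set W := Submodule.pi Sᶜ fun _ => (⊥ : Submodule R R)
  rcases hirr W (fun _ => diagonal_mulVec_mem_pi_compl_bot d)
    (fun _ => mulVec_mem_pi_compl_bot hS) with h | h
  · have hm : Pi.single m (1 : R) ∈ W := single_one_mem_pi_compl_bot_iff.2 .refl
    rw [h, Submodule.mem_bot] at hm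
    exact absurd hm (Pi.single_ne_zero_iff.2 one_ne_zero)
  · exact (single_one_mem_pi_compl_bot_iff (S := S)).1 (h ▸ Submodule.mem_top)

end Semiring

end Matrix

theorem stmt_6_general (n : ℕ) (d : Fin n → ℂ)
    (hdist : Function.Injective d)
    (A : Matrix (Fin n) (Fin n) ℂ) :
    (∀ V : Submodule ℂ (Fin n → ℂ),
        (∀ v ∈ V, (Matrix.diagonal d).mulVec v ∈ V) →
        (∀ v ∈ V, A.mulVec v ∈ V) → V = ⊥ ∨ V = ⊤)
    ↔ ∀ k m : Fin n, Relation.ReflTransGen (fun a b => A a b ≠ 0) k m :=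
  ⟨reflTransGen_of_forall_invariant_eq_bot_or_eq_top, fun hconn _ hΛ hA =>
    or_iff_not_imp_left.2 (eq_top_of_reflTransGen_of_diagonal_mulVec_mem hdist hconn hΛ hA)⟩

/-- Graph-theoretic irreducibility criterion: `{Λ, A}` is irreducible iff the
digraph `Γ_A` (edge `k → m` iff `A k m ≠ 0`) is strongly connected. -/
theorem stmt_6 (n : ℕ) (hn : 1 ≤ n) (d : Fin n → ℂ)
    (hdist : Function.Injective d) (hnz : ∀ k, d k ≠ 0)
    (A : Matrix (Fin n) (Fin n) ℂ) :
    (∀ V : Submodule ℂ (Fin n → ℂ),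
        (∀ v ∈ V, (Matrix.diagonal d).mulVec v ∈ V) →
        (∀ v ∈ V, A.mulVec v ∈ V) → V = ⊥ ∨ V = ⊤)
    ↔ ∀ k m : Fin n, Relation.ReflTransGen (fun a b => A a b ≠ 0) k m :=
  stmt_6_general n d hdist A
end

section
/- Let n ≥ 1, let Λ ∈ Mat(n,ℂ) be a diagonal matrix whose diagonal entries are pairwise distinct and all nonzero, and let A ∈ Mat(n,ℂ) be arbitrary. Then the family {Λ, A} is Schur irreducible if and only if the digraph Γ_A is weakly connected. -/
/-!
A matrix commuting with a diagonal matrix with distinct entries is itself diagonal, and a diagonal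
matrix `diagonal f` commutes with `A` exactly when `f a = f b` along every edge `a → b` of `Γ_A`.
So the commutant of `{Λ, A}` consists of the diagonal matrices whose entries are constant on the
weakly connected components of `Γ_A`; it is one-dimensional iff there is only one component, the
indicator of a component witnessing a non-scalar commuting matrix otherwise.
-/

namespace Relation

variable {α β : Type*} {r : α → α → Prop}

theorem ReflTransGen.eq_of_forall_rel_eq {f : α → β} (hf : ∀ a b, r a b → f a = f b)
    {a b : α} (h : ReflTransGen r a b) : f a = f b := by
  induction h with
  | refl => rfl
  | tail _ hbc ih => exact ih.trans (hf _ _ hbc)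

theorem forall_reflTransGen_symmGen_iff [Nontrivial β] :
    (∀ a b, ReflTransGen (SymmGen r) a b) ↔
      ∀ f : α → β, (∀ a b, r a b → f a = f b) → ∃ c, ∀ a, f a = c := by
  constructor
  · intro hconn f hf
    have hf' : ∀ a b, SymmGen r a b → f a = f b := fun a b hab =>
      hab.elim (hf a b) fun hba => (hf b a hba).symm
    rcases isEmpty_or_nonempty α with _ | ⟨⟨a₀⟩⟩
    · exact ⟨Classical.arbitrary β, isEmptyElim⟩
    · exact ⟨f a₀, fun a => ((hconn a₀ a).eq_of_forall_rel_eq hf').symm⟩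
  · intro hconst k m
    classical
    obtain ⟨x, y, hxy⟩ := exists_pair_ne β
    let f : α → β := fun j => if ReflTransGen (SymmGen r) k j then x else y
    have hf : ∀ a b, r a b → f a = f b := by
      intro a b hab
      have hcomp : ReflTransGen (SymmGen r) k a ↔ ReflTransGen (SymmGen r) k b :=
        ⟨fun h => h.tail (.of_rel hab), fun h => h.tail (.of_rel_symm hab)⟩
      simp only [f, hcomp]
    obtain ⟨c, hc⟩ := hconst f hf
    by_contra hkm
    have hfkm : f k = f m := (hc k).trans (hc m).symm
    simp only [f, ReflTransGen.refl, if_true, hkm, if_false] at hfkm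
    exact hxy hfkm

end Relation

namespace Matrix

variable {ι R : Type*} [Fintype ι] [DecidableEq ι] [CommRing R] [NoZeroDivisors R]

theorem diagonal_mul_eq_mul_diagonal_iff {f : ι → R} {A : Matrix ι ι R} :
    diagonal f * A = A * diagonal f ↔ ∀ a b, A a b ≠ 0 → f a = f b := by
  simp only [← Matrix.ext_iff, diagonal_mul, mul_diagonal]
  refine forall₂_congr fun a b => ?_
  rw [mul_comm, mul_eq_mul_left_iff, or_iff_not_imp_right]

theorem isDiag_of_diagonal_mul_eq {d : ι → R} (hd : Function.Injective d) {B : Matrix ι ι R}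
    (h : diagonal d * B = B * diagonal d) : B.IsDiag :=
  fun a b hab => by_contra fun hB => hab (hd (diagonal_mul_eq_mul_diagonal_iff.1 h a b hB))

end Matrix

theorem stmt_7_general (n : ℕ) (d : Fin n → ℂ)
    (hdist : Function.Injective d)
    (A : Matrix (Fin n) (Fin n) ℂ) :
    (∀ B : Matrix (Fin n) (Fin n) ℂ,
        B * Matrix.diagonal d = Matrix.diagonal d * B →
        B * A = A * B → ∃ c : ℂ, B = c • (1 : Matrix (Fin n) (Fin n) ℂ))
    ↔ ∀ k m : Fin n,
        Relation.ReflTransGen (fun a b => A a b ≠ 0 ∨ A b a ≠ 0) k m := by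
  refine Iff.trans ?_
    (Relation.forall_reflTransGen_symmGen_iff (β := ℂ) (r := fun a b => A a b ≠ 0)).symm
  constructor
  · intro hirr f hf
    obtain ⟨c, hc⟩ := hirr (Matrix.diagonal f) (Matrix.commute_diagonal f d)
      (Matrix.diagonal_mul_eq_mul_diagonal_iff.2 hf)
    exact ⟨c, fun a => by simpa using congr_fun₂ hc a a⟩
  · intro hconst B hBd hBA
    have hB := Matrix.isDiag_of_diagonal_mul_eq hdist hBd.symm
    rw [← hB.diagonal_diag] at hBA ⊢
    obtain ⟨c, hc⟩ := hconst _ (Matrix.diagonal_mul_eq_mul_diagonal_iff.1 hBA)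
    exact ⟨c, by rw [Matrix.smul_one_eq_diagonal, funext hc]⟩

/-- Graph-theoretic Schur irreducibility criterion: `{Λ, A}` is Schur irreducible
iff the digraph `Γ_A` is weakly connected. -/
theorem stmt_7 (n : ℕ) (hn : 1 ≤ n) (d : Fin n → ℂ)
    (hdist : Function.Injective d) (hnz : ∀ k, d k ≠ 0)
    (A : Matrix (Fin n) (Fin n) ℂ) :
    (∀ B : Matrix (Fin n) (Fin n) ℂ,
        B * Matrix.diagonal d = Matrix.diagonal d * B →
        B * A = A * B → ∃ c : ℂ, B = c • (1 : Matrix (Fin n) (Fin n) ℂ))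
    ↔ ∀ k m : Fin n,
        Relation.ReflTransGen (fun a b => A a b ≠ 0 ∨ A b a ≠ 0) k m :=
  stmt_7_general n d hdist A
end

section
/- Let n ≥ 1 and let G ⊆ {1,…,n}² be a set of index pairs. Then the unital ℂ-subalgebra of Mat(n,ℂ) generated by the matrix units {E_{km} : (k,m) ∈ G} equals Mat(n,ℂ) if and only if the digraph on vertex set {1,…,n} with edge set G is strongly connected, i.e., for every ordered pair of vertices (k,m) the pair (k,m) lies in the reflexive–transitive closure of the relation r defined by r k m ↔ (k,m) ∈ G. -/
/-!
If the digraph is strongly connected, every matrix unit `E_{ij}` is a product of generators along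
a path from `i` to `j` (for `i = j`, a closed walk through another vertex, or `E_{ii} = 1` when
`n = 1`), and the matrix units span everything. Conversely, if `m` is not reachable from `k`, all
generators are block triangular with respect to the partition into vertices reachable from `k`
and the rest, hence so is the generated algebra, which therefore misses `E_{km}`.
-/

open Matrix Relation

namespace Matrix

theorem le_of_blockTriangular_single {R ι α : Type*} [Zero R] [DecidableEq ι] [LinearOrder α]
    {b : ι → α} {i j : ι} {c : R} (hc : c ≠ 0) (h : BlockTriangular (single i j c) b) :
    b i ≤ b j :=
  not_lt.1 fun hlt => hc (by simpa using h hlt)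

variable {R ι : Type*} [CommSemiring R] [Fintype ι] [DecidableEq ι]

theorem adjoin_single_le_blockTriangularSubalgebra (G : Set (ι × ι)) (k : ι) :
    Algebra.adjoin R {E : Matrix ι ι R | ∃ p ∈ G, E = single p.1 p.2 1} ≤
      blockTriangularSubalgebra R R (ReflTransGen (fun a b => (a, b) ∈ G) k) := by
  refine Algebra.adjoin_le ?_
  rintro _ ⟨p, hp, rfl⟩
  exact blockTriangular_single (fun hk => hk.tail hp) _

variable {A : Subalgebra R (Matrix ι ι R)} {r : ι → ι → Prop}

theorem single_mem_of_transGen (hA : ∀ a b, r a b → single a b 1 ∈ A) {i j : ι}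
    (h : TransGen r i j) : single i j 1 ∈ A := by
  induction h with
  | single hij => exact hA _ _ hij
  | tail _ hjk ih => simpa using mul_mem ih (hA _ _ hjk)

theorem single_mem_of_forall_reflTransGen (hA : ∀ a b, r a b → single a b 1 ∈ A)
    (hr : ∀ a b, ReflTransGen r a b) (i j : ι) : single i j 1 ∈ A := by
  have htrans : ∀ a b, a ≠ b → TransGen r a b := fun a b hab =>
    (reflTransGen_iff_eq_or_transGen.1 (hr a b)).resolve_left hab.symm
  by_cases hij : i = j
  · subst hij
    by_cases hex : ∃ k, k ≠ i
    · obtain ⟨k, hk⟩ := hex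
      exact single_mem_of_transGen hA ((htrans i k hk.symm).trans (htrans k i hk))
    · have hall : ∀ k, k = i := by simpa using hex
      have hone : single i i (1 : R) = 1 := by
        ext a b
        rw [hall a, hall b]
        simp
      exact hone ▸ A.one_mem
  · exact single_mem_of_transGen hA (htrans i j hij)

theorem subalgebra_eq_top_of_single_mem (h : ∀ i j, single i j 1 ∈ A) : A = ⊤ := by
  refine eq_top_iff.2 fun M _ => ?_
  rw [matrix_eq_sum_single M]
  exact sum_mem fun i _ => sum_mem fun j _ => by simpa using A.smul_mem (h i j) (M i j)

end Matrix

theorem stmt_8_general (n : ℕ) (G : Set (Fin n × Fin n)) :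
    Algebra.adjoin ℂ
        {E : Matrix (Fin n) (Fin n) ℂ |
          ∃ p ∈ G, E = Matrix.single p.1 p.2 1} = ⊤
    ↔ ∀ k m : Fin n, Relation.ReflTransGen (fun a b => (a, b) ∈ G) k m := by
  constructor
  · intro htop k m
    have hmem := adjoin_single_le_blockTriangularSubalgebra G k
      (htop ▸ Algebra.mem_top : single k m (1 : ℂ) ∈ _)
    exact le_of_blockTriangular_single one_ne_zero hmem ReflTransGen.refl
  · intro hconn
    exact subalgebra_eq_top_of_single_mem <| single_mem_of_forall_reflTransGen
      (fun a b hab => Algebra.subset_adjoin ⟨(a, b), hab, rfl⟩) hconn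

/-- A set `G` of index pairs generates `Mat(n, ℂ)` via matrix units iff the digraph
with edge set `G` is strongly connected. -/
theorem stmt_8 (n : ℕ) (hn : 1 ≤ n) (G : Set (Fin n × Fin n)) :
    Algebra.adjoin ℂ
        {E : Matrix (Fin n) (Fin n) ℂ |
          ∃ p ∈ G, E = Matrix.single p.1 p.2 1} = ⊤
    ↔ ∀ k m : Fin n, Relation.ReflTransGen (fun a b => (a, b) ∈ G) k m :=
  stmt_8_general n G
end

section
/- Let n ≥ 1 and let G ⊆ {1,…,n}² be a set of index pairs. Then G is a minimal generating subset (i.e., the unital ℂ-subalgebra of Mat(n,ℂ) generated by {E_{km} : (k,m) ∈ G} equals Mat(n,ℂ), and no proper subset of G has this property) if and only if the digraph on vertex set {1,…,n} with edge set G is minimally strongly connected (it is strongly connected, and removing any single edge from G destroys strong connectedness). -/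
/-!
Matrix units multiply along paths, `E_{ij} E_{jk} = E_{ik}`, so the algebra generated by
`{E_{km} : (k,m) ∈ G}` contains `E_{km}` whenever `m` is reachable from `k`; if the digraph is
strongly connected this gives every matrix unit, hence everything. Conversely, the matrices
supported on the reachability relation of `G` form a subalgebra containing the generators, which
is proper unless `G` is strongly connected. Thus generating `Mat(n, ℂ)` and strong connectivity
are the same monotone property of `G`, and so are their minimal instances.
-/

open Relation

theorem Relation.TransGen.of_forall_reflTransGen {α : Type*} [Nontrivial α] {r : α → α → Prop}
    (h : ∀ a b, ReflTransGen r a b) (a b : α) : TransGen r a b := by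
  obtain ⟨c, hc⟩ := exists_ne a
  exact ((reflTransGen_iff_eq_or_transGen.mp (h a c)).resolve_left hc).trans_left (h c b)

namespace Matrix

variable {ι R : Type*} [Fintype ι] [DecidableEq ι] [CommSemiring R]

variable (R) in
def matrixUnits (G : Set (ι × ι)) : Set (Matrix ι ι R) :=
  {E | ∃ p ∈ G, E = single p.1 p.2 1}

variable (R) in
def reachSubalgebra (r : ι → ι → Prop) : Subalgebra R (Matrix ι ι R) where
  carrier := {M | ∀ i j, M i j ≠ 0 → ReflTransGen r i j}
  mul_mem' {M N} hM hN i j hij := by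
    obtain ⟨k, -, hk⟩ := Finset.exists_ne_zero_of_sum_ne_zero hij
    exact (hM i k (left_ne_zero_of_mul hk)).trans (hN k j (right_ne_zero_of_mul hk))
  add_mem' {M N} hM hN i j hij := by
    by_cases hMij : M i j = 0
    · exact hN i j (by simpa [hMij] using hij)
    · exact hM i j hMij
  algebraMap_mem' c i j hij := by
    by_cases hij' : i = j
    · exact hij' ▸ ReflTransGen.refl
    · simp [algebraMap_eq_diagonal, hij'] at hij

theorem adjoin_matrixUnits_le_reachSubalgebra (G : Set (ι × ι)) :
    Algebra.adjoin R (matrixUnits R G) ≤ reachSubalgebra R (fun a b => (a, b) ∈ G) := by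
  refine Algebra.adjoin_le ?_
  rintro _ ⟨⟨a, b⟩, hab, rfl⟩ i j hij
  obtain ⟨rfl, rfl⟩ : a = i ∧ b = j := of_not_not fun h => hij (single_apply_of_ne _ _ _ _ _ h)
  exact ReflTransGen.single hab

theorem single_one_mem_adjoin_matrixUnits_of_transGen {G : Set (ι × ι)} {k m : ι}
    (h : TransGen (fun a b => (a, b) ∈ G) k m) :
    single k m (1 : R) ∈ Algebra.adjoin R (matrixUnits R G) := by
  induction h with
  | single hkm => exact Algebra.subset_adjoin ⟨_, hkm, rfl⟩
  | @tail j m _ hjm ih =>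
    simpa only [single_mul_single_same, one_mul] using
      mul_mem ih (Algebra.subset_adjoin ⟨(j, m), hjm, rfl⟩)

theorem single_one_mem_adjoin_matrixUnits {G : Set (ι × ι)}
    (hG : ∀ k m, ReflTransGen (fun a b => (a, b) ∈ G) k m) (k m : ι) :
    single k m (1 : R) ∈ Algebra.adjoin R (matrixUnits R G) := by
  rcases subsingleton_or_nontrivial ι with hι | hι
  · obtain rfl := Subsingleton.elim k m
    have hone : single k k (1 : R) = 1 := by
      ext i j
      obtain rfl := Subsingleton.elim i k
      obtain rfl := Subsingleton.elim j i
      simp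
    exact hone ▸ one_mem _
  · exact single_one_mem_adjoin_matrixUnits_of_transGen
      (TransGen.of_forall_reflTransGen hG k m)

theorem adjoin_matrixUnits_eq_top_iff [Nontrivial R] (G : Set (ι × ι)) :
    Algebra.adjoin R (matrixUnits R G) = ⊤ ↔ ∀ k m, ReflTransGen (fun a b => (a, b) ∈ G) k m := by
  refine ⟨fun htop k m => ?_, fun hG => eq_top_iff.mpr fun M _ => ?_⟩
  · have hmem : single k m (1 : R) ∈ reachSubalgebra R (fun a b => (a, b) ∈ G) :=
      adjoin_matrixUnits_le_reachSubalgebra G (htop ▸ Algebra.mem_top)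
    exact hmem k m (by simp)
  · rw [matrix_eq_sum_single M]
    refine sum_mem fun i _ => sum_mem fun j _ => ?_
    rw [← mul_one (M i j), ← smul_eq_mul, ← smul_single]
    exact Subalgebra.smul_mem _ (single_one_mem_adjoin_matrixUnits hG i j) _

end Matrix

theorem stmt_9_general (n : ℕ) (G : Set (Fin n × Fin n)) :
    (Algebra.adjoin ℂ
        {E : Matrix (Fin n) (Fin n) ℂ |
          ∃ p ∈ G, E = Matrix.single p.1 p.2 1} = ⊤ ∧
      ∀ G' : Set (Fin n × Fin n), G' ⊂ G →
        Algebra.adjoin ℂ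
          {E : Matrix (Fin n) (Fin n) ℂ |
            ∃ p ∈ G', E = Matrix.single p.1 p.2 1} ≠ ⊤)
    ↔ ((∀ k m : Fin n, Relation.ReflTransGen (fun a b => (a, b) ∈ G) k m) ∧
      ∀ e ∈ G, ¬ ∀ k m : Fin n,
        Relation.ReflTransGen (fun a b => (a, b) ∈ G \ {e}) k m) := by
  have hgen : (fun G => Algebra.adjoin ℂ (Matrix.matrixUnits ℂ G) = ⊤) =
      fun G => ∀ k m : Fin n, ReflTransGen (fun a b => (a, b) ∈ G) k m :=
    funext fun G => propext (Matrix.adjoin_matrixUnits_eq_top_iff G)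
  have hmono : ∀ ⦃s t : Set (Fin n × Fin n)⦄, (∀ k m, ReflTransGen (fun a b => (a, b) ∈ t) k m) →
      t ⊆ s → ∀ k m, ReflTransGen (fun a b => (a, b) ∈ s) k m :=
    fun _ _ ht hts k m => ReflTransGen.mono (fun _ _ hab => hts hab) k m (ht k m)
  have hmin := Set.minimal_iff_forall_sdiff_singleton (s := G) hmono
  rw [← hgen, Set.minimal_iff_forall_ssubset] at hmin
  exact hmin

/-- `G` is a minimal generating set of matrix units for `Mat(n, ℂ)` iff the digraph
with edge set `G` is minimally strongly connected. -/
theorem stmt_9 (n : ℕ) (hn : 1 ≤ n) (G : Set (Fin n × Fin n)) :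
    (Algebra.adjoin ℂ
        {E : Matrix (Fin n) (Fin n) ℂ |
          ∃ p ∈ G, E = Matrix.single p.1 p.2 1} = ⊤ ∧
      ∀ G' : Set (Fin n × Fin n), G' ⊂ G →
        Algebra.adjoin ℂ
          {E : Matrix (Fin n) (Fin n) ℂ |
            ∃ p ∈ G', E = Matrix.single p.1 p.2 1} ≠ ⊤)
    ↔ ((∀ k m : Fin n, Relation.ReflTransGen (fun a b => (a, b) ∈ G) k m) ∧
      ∀ e ∈ G, ¬ ∀ k m : Fin n,
        Relation.ReflTransGen (fun a b => (a, b) ∈ G \ {e}) k m) :=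
  stmt_9_general n G
end
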